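/- arXiv:2203.08377 — 6 statements merged into one kernel-verified Lean document; each statement's English description precedes it below -/
import Mathlib

section
/- Let $\widetilde{m} > 0$ and consider $f(t_1,t_2) = \log(1+\widetilde{m} t_1^2) + \log(1+\widetilde{m} t_2^2)$ with constraint $t_1 + t_2 = 1$, $t_1, t_2 \geq 0$. If $\widetilde{m} \leq 8$, then the maximum is attained at $(t_1,t_2) \in \{(1,0),(0,1)\}$; if $\widetilde{m} > 8$, then the maximum is attained at $t_1 = t_2 = 1/2$. -/
/-! With `t₁ + t₂ = 1` and `p = t₁ t₂ ∈ [0, 1/4]`, the product of the two arguments of the logarithms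
is `1 + m + x (x - 2)` with `x = m p ∈ [0, m/4]`, a convex function of `x`. Its maximum is at `x = 0`
(full concentration, value `1 + m`) when `m ≤ 8`, and at `x = m/4` (even split, value `(1 + m/4)²`)
when `m ≥ 8`. -/

open Real

theorem Real.log_add_log_le_log_add_log {a b c d : ℝ} (ha : 0 < a) (hb : 0 < b) (hc : 0 < c)
    (hd : 0 < d) (h : a * b ≤ c * d) : log a + log b ≤ log c + log d := by
  rw [← log_mul ha.ne' hb.ne', ← log_mul hc.ne' hd.ne']
  exact log_le_log (mul_pos ha hb) h

section Partition

variable {m t₁ t₂ : ℝ}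

theorem one_add_mul_sq_mul_one_add_mul_sq (h : t₁ + t₂ = 1) :
    (1 + m * t₁ ^ 2) * (1 + m * t₂ ^ 2) = 1 + m + m * (t₁ * t₂) * (m * (t₁ * t₂) - 2) := by
  obtain rfl : t₂ = 1 - t₁ := by linarith
  ring

theorem mul_le_one_div_four_of_add_eq_one (h : t₁ + t₂ = 1) : t₁ * t₂ ≤ 1 / 4 := by
  nlinarith [four_mul_le_sq_add t₁ t₂]

theorem one_add_mul_sq_mul_le_of_le_eight (hm : 0 ≤ m) (hm8 : m ≤ 8) (h₁ : 0 ≤ t₁) (h₂ : 0 ≤ t₂)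
    (h : t₁ + t₂ = 1) : (1 + m * t₁ ^ 2) * (1 + m * t₂ ^ 2) ≤ 1 + m := by
  rw [one_add_mul_sq_mul_one_add_mul_sq h]
  have hx₀ : 0 ≤ m * (t₁ * t₂) := by positivity
  have hx₂ : m * (t₁ * t₂) ≤ 2 := by nlinarith [mul_le_one_div_four_of_add_eq_one h]
  nlinarith [mul_nonneg hx₀ (sub_nonneg.2 hx₂)]

theorem one_add_mul_sq_mul_le_of_eight_le (hm8 : 8 ≤ m) (h₁ : 0 ≤ t₁) (h₂ : 0 ≤ t₂)
    (h : t₁ + t₂ = 1) : (1 + m * t₁ ^ 2) * (1 + m * t₂ ^ 2) ≤ (1 + m * (1 / 2) ^ 2) ^ 2 := by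
  rw [one_add_mul_sq_mul_one_add_mul_sq h]
  have hx₀ : 0 ≤ m * (t₁ * t₂) := mul_nonneg (by linarith) (mul_nonneg h₁ h₂)
  have hx : m * (t₁ * t₂) ≤ m / 4 := by nlinarith [mul_le_one_div_four_of_add_eq_one h]
  -- `x (x - 2) ≤ M (M - 2)` as `(M - x) (x + M - 2) ≥ 0`, with `M = m/4 ≥ 2`
  nlinarith [mul_nonneg (sub_nonneg.2 hx) (by linarith : 0 ≤ m * (t₁ * t₂) + m / 4 - 2)]

end Partition

theorem stmt_3 (m : ℝ) (hm : 0 < m) :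
    (m ≤ 8 → ∀ t1 t2 : ℝ, 0 ≤ t1 → 0 ≤ t2 → t1 + t2 = 1 →
      Real.log (1 + m * t1 ^ 2) + Real.log (1 + m * t2 ^ 2) ≤
        Real.log (1 + m * 1 ^ 2) + Real.log (1 + m * 0 ^ 2)) ∧
    (8 < m → ∀ t1 t2 : ℝ, 0 ≤ t1 → 0 ≤ t2 → t1 + t2 = 1 →
      Real.log (1 + m * t1 ^ 2) + Real.log (1 + m * t2 ^ 2) ≤
        Real.log (1 + m * (1 / 2 : ℝ) ^ 2) + Real.log (1 + m * (1 / 2 : ℝ) ^ 2)) := by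
  constructor
  · intro hm8 t1 t2 h₁ h₂ h
    refine log_add_log_le_log_add_log (by positivity) (by positivity) (by positivity)
      (by positivity) ?_
    exact (one_add_mul_sq_mul_le_of_le_eight hm.le hm8 h₁ h₂ h).trans_eq (by ring)
  · intro hm8 t1 t2 h₁ h₂ h
    refine log_add_log_le_log_add_log (by positivity) (by positivity) (by positivity)
      (by positivity) ?_
    exact (one_add_mul_sq_mul_le_of_eight_le hm8.le h₁ h₂ h).trans_eq (sq _)
end

section
/- Let $\widetilde{m}_1 \geq \widetilde{m}_2 > 0$. If $2 + \sqrt{1 - \widetilde{m}_2/\widetilde{m}_1} \geq \sqrt{\widetilde{m}_2}$, then for all $t \in [0,1]$: $\log(1+\widetilde{m}_1 t^2) + \log(1+\widetilde{m}_2(1-t)^2) \leq \log(1+\widetilde{m}_1)$. -/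
/-!
Since `log` is monotone and turns products into sums, it suffices to show
`(1 + m₁ t²)(1 + m₂ (1 - t)²) ≤ 1 + m₁`. The difference of the two sides is `(1 - t)` times
`(m₁ - m₂)(1 - t) + 2 m₁ t - m₁ m₂ t² (1 - t)`. With `s = √(1 - m₂/m₁) ∈ [0, 1]` the hypothesis
gives `m₂ ≤ (2 + s)² ≤ 8 + s²`, i.e. `m₁ m₂ ≤ 9 m₁ - m₂`, and then the bracket is nonnegative
because `4 t (1 - t) ≤ 1` and `t² ≤ 1`.
-/

lemma mul_le_nine_mul_sub_of_sqrt_le_two_add_sqrt {m₁ m₂ : ℝ} (hm₂ : 0 ≤ m₂) (hm : m₂ ≤ m₁)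
    (hm₁ : 0 < m₁) (h : √m₂ ≤ 2 + √(1 - m₂ / m₁)) :
    m₁ * m₂ ≤ 9 * m₁ - m₂ := by
  have hr₀ : 0 ≤ m₂ / m₁ := div_nonneg hm₂ hm₁.le
  have hr₁ : m₂ / m₁ ≤ 1 := (div_le_one hm₁).2 hm
  set s := √(1 - m₂ / m₁)
  have hs₀ : 0 ≤ s := Real.sqrt_nonneg _
  have hs₁ : s ≤ 1 := Real.sqrt_le_one.2 (by linarith)
  have hs_sq : s ^ 2 = 1 - m₂ / m₁ := Real.sq_sqrt (by linarith)
  have hm₂_le : m₂ ≤ 9 - m₂ / m₁ :=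
    calc m₂ ≤ (2 + s) ^ 2 := (Real.sqrt_le_left (by positivity)).1 h
      _ ≤ 8 + s ^ 2 := by nlinarith
      _ = 9 - m₂ / m₁ := by rw [hs_sq]; ring
  calc m₁ * m₂ ≤ m₁ * (9 - m₂ / m₁) := mul_le_mul_of_nonneg_left hm₂_le hm₁.le
    _ = 9 * m₁ - m₂ := by field_simp

lemma one_add_mul_sq_mul_one_add_mul_one_sub_sq_le {m₁ m₂ t : ℝ} (hm : m₂ ≤ m₁) (hm₁ : 0 ≤ m₁)
    (h : m₁ * m₂ ≤ 9 * m₁ - m₂) (ht₀ : 0 ≤ t) (ht₁ : t ≤ 1) :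
    (1 + m₁ * t ^ 2) * (1 + m₂ * (1 - t) ^ 2) ≤ 1 + m₁ := by
  have ht : 0 ≤ 1 - t := sub_nonneg.2 ht₁
  have hbracket : m₁ * m₂ * (t ^ 2 * (1 - t)) ≤ (m₁ - m₂) * (1 - t) + 2 * m₁ * t :=
    calc m₁ * m₂ * (t ^ 2 * (1 - t)) ≤ (9 * m₁ - m₂) * (t ^ 2 * (1 - t)) := by gcongr
      _ = 2 * m₁ * t * (4 * t * (1 - t)) + (m₁ - m₂) * (t ^ 2 * (1 - t)) := by ring
      _ ≤ 2 * m₁ * t * 1 + (m₁ - m₂) * (1 * (1 - t)) := by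
        gcongr
        · nlinarith [sq_nonneg (2 * t - 1)]
        · exact pow_le_one₀ ht₀ ht₁
      _ = (m₁ - m₂) * (1 - t) + 2 * m₁ * t := by ring
  calc (1 + m₁ * t ^ 2) * (1 + m₂ * (1 - t) ^ 2)
      = 1 + m₁ - (1 - t) * ((m₁ - m₂) * (1 - t) + 2 * m₁ * t - m₁ * m₂ * (t ^ 2 * (1 - t))) := by
        ring
    _ ≤ 1 + m₁ := by linarith [mul_nonneg ht (sub_nonneg.2 hbracket)]

theorem stmt_4 (m1 m2 : ℝ) (hm2 : 0 < m2) (hm : m2 ≤ m1)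
    (hcond : Real.sqrt m2 ≤ 2 + Real.sqrt (1 - m2 / m1)) :
    ∀ t : ℝ, 0 ≤ t → t ≤ 1 →
      Real.log (1 + m1 * t ^ 2) + Real.log (1 + m2 * (1 - t) ^ 2) ≤
        Real.log (1 + m1) := by
  intro t ht₀ ht₁
  have hm1 : 0 < m1 := hm2.trans_le hm
  have hprod := one_add_mul_sq_mul_one_add_mul_one_sub_sq_le hm hm1.le
    (mul_le_nine_mul_sub_of_sqrt_le_two_add_sqrt hm2.le hm hm1 hcond) ht₀ ht₁
  have ha : 0 < 1 + m1 * t ^ 2 := by positivity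
  have hb : 0 < 1 + m2 * (1 - t) ^ 2 := by positivity
  rw [← Real.log_mul ha.ne' hb.ne']
  exact Real.log_le_log (mul_pos ha hb) hprod
end

section
/- Let $\widetilde{m}_1 \geq \widetilde{m}_2 > 4$ and suppose $t_1, t_2 > 0$ with $t_1 + t_2 = 1$, $t_1 = 1/w + \sqrt{1/w^2 - 1/\widetilde{m}_1}$ and $t_2 = 1/w + \sqrt{1/w^2 - 1/\widetilde{m}_2}$ for some $0 < w \leq \sqrt{\widetilde{m}_2}$. Then $t_2 \leq 1/2 \leq t_1$, $\widetilde{m}_1 t_1^2 > 1$, $\widetilde{m}_2 t_2^2 \geq 1$, and the function $C(t) = \log(1+\widetilde{m}_1 t^2) + \log(1+\widetilde{m}_2(1-t)^2)$ satisfies $C''(t_1) < 0$, i.e., $(t_1, t_2)$ is a strict local maximum of $C$ on the line $t_1+t_2=1$. -/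
/-!
The two KKT coordinates are both of the form `kktRoot w m`, which is monotone in `m`; hence
`m₂ ≤ m₁` forces `t₂ ≤ t₁`, and `t₁ + t₂ = 1` places them on either side of `1/2`. Then
`m₁ t₁² > 4 · 1/4 = 1`, while `t₂ ≥ 1/w ≥ 1/√m₂` gives `m₂ t₂² ≥ 1`. Each summand of `C''` has
the sign of `1 - m t²`, so the first is negative and the second non-positive.
-/

/-- The larger root `t = 1/w + √(1/w² - 1/m)` of the stationarity equation `t² - 2t/w + 1/m = 0`. -/
noncomputable def kktRoot (w m : ℝ) : ℝ :=
  1 / w + Real.sqrt (1 / w ^ 2 - 1 / m)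

lemma kktRoot_mono (w : ℝ) {a b : ℝ} (ha : 0 < a) (hab : a ≤ b) : kktRoot w a ≤ kktRoot w b := by
  have h_inv : 1 / b ≤ 1 / a := one_div_le_one_div_of_le ha hab
  unfold kktRoot
  gcongr

lemma one_div_le_kktRoot (w m : ℝ) : 1 / w ≤ kktRoot w m :=
  le_add_of_nonneg_right (Real.sqrt_nonneg _)

lemma one_le_mul_kktRoot_sq {w m : ℝ} (hw : 0 < w) (hwm : w ^ 2 ≤ m) :
    1 ≤ m * kktRoot w m ^ 2 := by
  have h_root : (1 / w) ^ 2 ≤ kktRoot w m ^ 2 := by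
    gcongr
    exact one_div_le_kktRoot w m
  calc 1 = w ^ 2 * (1 / w) ^ 2 := by field_simp
    _ ≤ m * kktRoot w m ^ 2 := by gcongr; exact (sq_nonneg w).trans hwm

lemma one_lt_mul_sq_of_half_le {m t : ℝ} (hm : 4 < m) (ht : 1 / 2 ≤ t) : 1 < m * t ^ 2 := by
  have h_sq : 1 / 4 ≤ t ^ 2 := by nlinarith
  nlinarith

lemma two_mul_one_sub_div_sq_neg {m x : ℝ} (hm : 0 < m) (hx : 1 < x) : 2 * m * (1 - x) / (1 + x) ^ 2 < 0 :=
  div_neg_of_neg_of_pos (by nlinarith) (by positivity)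

lemma two_mul_one_sub_div_sq_nonpos {m x : ℝ} (hm : 0 < m) (hx : 1 ≤ x) :
    2 * m * (1 - x) / (1 + x) ^ 2 ≤ 0 :=
  div_nonpos_of_nonpos_of_nonneg (by nlinarith) (by positivity)

theorem stmt_6_general (m1 m2 w t1 t2 : ℝ) (hm2 : 4 < m2) (hm : m2 ≤ m1)
    (hw : 0 < w) (hw2 : w ≤ Real.sqrt m2)
    (hsum : t1 + t2 = 1)
    (ht1 : t1 = 1 / w + Real.sqrt (1 / w ^ 2 - 1 / m1))
    (ht2 : t2 = 1 / w + Real.sqrt (1 / w ^ 2 - 1 / m2)) :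
    t2 ≤ 1 / 2 ∧ 1 / 2 ≤ t1 ∧ 1 < m1 * t1 ^ 2 ∧ 1 ≤ m2 * t2 ^ 2 ∧
      2 * m1 * (1 - m1 * t1 ^ 2) / (1 + m1 * t1 ^ 2) ^ 2 +
        2 * m2 * (1 - m2 * (1 - t1) ^ 2) / (1 + m2 * (1 - t1) ^ 2) ^ 2 < 0 := by
  have hm2_pos : 0 < m2 := by linarith
  have hm1 : 4 < m1 := hm2.trans_le hm
  have ht21 : t2 ≤ t1 := by
    rw [ht1, ht2]
    exact kktRoot_mono w hm2_pos hm
  have ht2_half : t2 ≤ 1 / 2 := by linarith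
  have ht1_half : 1 / 2 ≤ t1 := by linarith
  have hA : 1 < m1 * t1 ^ 2 := one_lt_mul_sq_of_half_le hm1 ht1_half
  have hB : 1 ≤ m2 * t2 ^ 2 := by
    rw [ht2]
    exact one_le_mul_kktRoot_sq hw ((Real.le_sqrt hw.le hm2_pos.le).1 hw2)
  refine ⟨ht2_half, ht1_half, hA, hB, ?_⟩
  rw [show 1 - t1 = t2 by linarith]
  exact add_neg_of_neg_of_nonpos (two_mul_one_sub_div_sq_neg (by linarith) hA)
    (two_mul_one_sub_div_sq_nonpos hm2_pos hB)

theorem stmt_6 (m1 m2 w t1 t2 : ℝ) (hm2 : 4 < m2) (hm : m2 ≤ m1)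
    (hw : 0 < w) (hw2 : w ≤ Real.sqrt m2)
    (ht1pos : 0 < t1) (ht2pos : 0 < t2) (hsum : t1 + t2 = 1)
    (ht1 : t1 = 1 / w + Real.sqrt (1 / w ^ 2 - 1 / m1))
    (ht2 : t2 = 1 / w + Real.sqrt (1 / w ^ 2 - 1 / m2)) :
    t2 ≤ 1 / 2 ∧ 1 / 2 ≤ t1 ∧ 1 < m1 * t1 ^ 2 ∧ 1 ≤ m2 * t2 ^ 2 ∧
      2 * m1 * (1 - m1 * t1 ^ 2) / (1 + m1 * t1 ^ 2) ^ 2 +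
        2 * m2 * (1 - m2 * (1 - t1) ^ 2) / (1 + m2 * (1 - t1) ^ 2) ^ 2 < 0 :=
  stmt_6_general m1 m2 w t1 t2 hm2 hm hw hw2 hsum ht1 ht2
end

section
/- Let $\widetilde{m}_1 \geq \widetilde{m}_2 > 0$ and let $t_1, t_2 > 0$ with $t_1 + t_2 = 1$, and suppose $t_1 t_2 \leq 1/\widetilde{m}_2$. Then $\log(1+\widetilde{m}_1 t_1^2) + \log(1+\widetilde{m}_2 t_2^2) \leq \log(1+\widetilde{m}_1)$. -/
/-!
Since `b ≤ a`, the product `(1 + a t₁²)(1 + b t₂²)` is at most `1 + a (t₁² + t₂² + b (t₁ t₂)²)`,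
and `t₁ + t₂ = 1` turns the bracket into the quadratic `1 - 2x + b x²` in `x = t₁ t₂`, which is at
most `1` as long as `0 ≤ x` and `b x ≤ 2`. Taking logarithms gives the claim.
-/

lemma one_add_mul_mul_one_add_mul_le {a b u v : ℝ} (hba : b ≤ a) (hv : 0 ≤ v) :
    (1 + a * u) * (1 + b * v) ≤ 1 + a * (u + v + b * (u * v)) := by
  nlinarith [mul_le_mul_of_nonneg_right hba hv]

lemma one_sub_two_mul_add_mul_sq_le_one {b x : ℝ} (hx : 0 ≤ x) (hbx : b * x ≤ 2) :
    1 - 2 * x + b * x ^ 2 ≤ 1 := by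
  nlinarith [mul_le_mul_of_nonneg_left hbx hx]

theorem one_add_mul_sq_mul_one_add_mul_sq_le {a b t₁ t₂ : ℝ} (hba : b ≤ a) (ha : 0 ≤ a)
    (hsum : t₁ + t₂ = 1) (hx : 0 ≤ t₁ * t₂) (hbx : b * (t₁ * t₂) ≤ 2) :
    (1 + a * t₁ ^ 2) * (1 + b * t₂ ^ 2) ≤ 1 + a := by
  have hsq : t₁ ^ 2 + t₂ ^ 2 = 1 - 2 * (t₁ * t₂) := by
    linear_combination (t₁ + t₂ + 1) * hsum
  calc (1 + a * t₁ ^ 2) * (1 + b * t₂ ^ 2)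
      ≤ 1 + a * (t₁ ^ 2 + t₂ ^ 2 + b * (t₁ ^ 2 * t₂ ^ 2)) :=
        one_add_mul_mul_one_add_mul_le hba (sq_nonneg t₂)
    _ = 1 + a * (1 - 2 * (t₁ * t₂) + b * (t₁ * t₂) ^ 2) := by rw [hsq, mul_pow]
    _ ≤ 1 + a * 1 := by gcongr; exact one_sub_two_mul_add_mul_sq_le_one hx hbx
    _ = 1 + a := by rw [mul_one]

theorem stmt_7 (m1 m2 t1 t2 : ℝ) (hm2 : 0 < m2) (hm : m2 ≤ m1)
    (ht1 : 0 < t1) (ht2 : 0 < t2) (hsum : t1 + t2 = 1)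
    (hprod : t1 * t2 ≤ 1 / m2) :
    Real.log (1 + m1 * t1 ^ 2) + Real.log (1 + m2 * t2 ^ 2) ≤ Real.log (1 + m1) := by
  have hm1 : 0 < m1 := hm2.trans_le hm
  have hx : m2 * (t1 * t2) ≤ 2 := by
    have := (le_div_iff₀' hm2).mp hprod
    linarith
  have h1 : 0 < 1 + m1 * t1 ^ 2 := by positivity
  have h2 : 0 < 1 + m2 * t2 ^ 2 := by positivity
  rw [← Real.log_mul h1.ne' h2.ne']
  exact Real.log_le_log (mul_pos h1 h2)
    (one_add_mul_sq_mul_one_add_mul_sq_le hm hm1.le hsum (mul_pos ht1 ht2).le hx)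
end

section
/- Let $S \geq 1$, $m_s > 0$ and $p_s > 0$ for $s = 1,\ldots,S$, and suppose $(\mathbf{p},\mathbf{t})$ with all $p_s^{\sf r} > 0$, $t_s > 0$ satisfies the KKT stationarity conditions: there exist $v, w$ such that $\frac{m_s t_s^2}{1 + m_s p_s^{\sf r} t_s^2} = v$ and $\frac{2 m_s p_s^{\sf r} t_s}{1 + m_s p_s^{\sf r} t_s^2} = w$ for all $s$, together with $\sum_s t_s = 1$. Then $t_s = \frac{p_s^{\sf r}}{P^{\sf r}}$ for every $s$, where $P^{\sf r} = \sum_{i=1}^S p_i^{\sf r}$, and moreover $\frac{2v}{w} = \frac{1}{P^{\sf r}}$. -/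
/-!
The two stationarity conditions share their denominator, so comparing numerators gives the
pointwise identity `2 v p_s = t_s w`. Summing it with `∑ t_s = 1` gives `w = 2 v P`, and
substituting back yields `t_s P = p_s`; here `v ≠ 0` because `m_s t_s² > 0`.
-/

open Finset

theorem two_mul_mul_eq_mul_of_stationary {m p t v w : ℝ} (hd : 1 + m * p * t ^ 2 ≠ 0)
    (h₁ : m * t ^ 2 / (1 + m * p * t ^ 2) = v) (h₂ : 2 * m * p * t / (1 + m * p * t ^ 2) = w) :
    2 * v * p = t * w := by
  rw [← h₁, ← h₂, mul_div_assoc', div_mul_eq_mul_div, mul_div_assoc', div_left_inj' hd]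
  ring

theorem eq_div_sum_of_mul_eq_mul {ι K : Type*} [Fintype ι] [Field K] {p t : ι → K} {c w : K}
    (hc : c ≠ 0) (hp : ∑ i, p i ≠ 0) (h : ∀ i, c * p i = t i * w) (ht : ∑ i, t i = 1) :
    (∀ i, t i = p i / ∑ j, p j) ∧ w = c * ∑ j, p j := by
  have hw : w = c * ∑ j, p j := by
    rw [mul_sum, sum_congr rfl fun i _ => h i, ← sum_mul, ht, one_mul]
  refine ⟨fun i => ?_, hw⟩
  rw [eq_div_iff hp]
  apply mul_left_cancel₀ hc
  rw [h i, hw]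
  ring

theorem stmt_12_general (S : ℕ) (m p t : Fin S → ℝ) (v w : ℝ)
    (hm : ∀ s, 0 < m s) (hp : ∀ s, 0 < p s) (ht : ∀ s, 0 < t s)
    (hstat1 : ∀ s, m s * (t s) ^ 2 / (1 + m s * p s * (t s) ^ 2) = v)
    (hstat2 : ∀ s, 2 * m s * p s * t s / (1 + m s * p s * (t s) ^ 2) = w)
    (htsum : ∑ s, t s = 1) :
    (∀ s, t s = p s / (∑ i, p i)) ∧ 2 * v / w = 1 / (∑ i, p i) := by
  have hden (s : Fin S) : 0 < 1 + m s * p s * t s ^ 2 := by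
    have := hm s; have := hp s; have := ht s
    positivity
  have hkey (s : Fin S) : 2 * v * p s = t s * w :=
    two_mul_mul_eq_mul_of_stationary (hden s).ne' (hstat1 s) (hstat2 s)
  obtain ⟨s₀, -, -⟩ := exists_ne_zero_of_sum_ne_zero (htsum ▸ one_ne_zero)
  have hv : 0 < v := by
    rw [← hstat1 s₀]
    have := hm s₀; have := ht s₀
    exact div_pos (by positivity) (hden s₀)
  have hP : 0 < ∑ i, p i := sum_pos (fun i _ => hp i) ⟨s₀, mem_univ _⟩
  obtain ⟨hprop, hw⟩ := eq_div_sum_of_mul_eq_mul (by positivity) hP.ne' hkey htsum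
  refine ⟨hprop, ?_⟩
  rw [hw]
  field_simp

theorem stmt_12 (S : ℕ) (hS : 1 ≤ S) (m p t : Fin S → ℝ) (v w : ℝ)
    (hm : ∀ s, 0 < m s) (hp : ∀ s, 0 < p s) (ht : ∀ s, 0 < t s)
    (hstat1 : ∀ s, m s * (t s) ^ 2 / (1 + m s * p s * (t s) ^ 2) = v)
    (hstat2 : ∀ s, 2 * m s * p s * t s / (1 + m s * p s * (t s) ^ 2) = w)
    (htsum : ∑ s, t s = 1) :
    (∀ s, t s = p s / (∑ i, p i)) ∧ 2 * v / w = 1 / (∑ i, p i) :=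
  stmt_12_general S m p t v w hm hp ht hstat1 hstat2 htsum
end

section
/- Let $m > 0$, $v > 0$, $P^{\sf r} > 0$. Any $p > 0$ satisfying both $p = \frac{1}{v} - \frac{1}{m t^2}$ and $t = \frac{1}{w} + \sqrt{\frac{1}{w^2} - \frac{1}{m p}}$ with $t = p/P^{\sf r}$ and $w = 2 v P^{\sf r}$ is a root of the cubic equation $p^3 - \frac{1}{v}p^2 + \frac{(P^{\sf r})^2}{m} = 0$ with $p \geq \max\left\{\frac{4v^2 (P^{\sf r})^2}{m}, \frac{1}{2v}\right\}$. -/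
/-!
Clearing denominators in `p = 1/v - Pr²/(m p²)` gives the cubic. The cubic in turn gives
`Pr²/m = p²/v - p³`, so `p - 4 v² Pr²/m = p (2 v p - 1)² ≥ 0`. The bound `1/(2v) ≤ p` is the
nonnegativity of the square root: `p / Pr = t ≥ 1/w = 1/(2 v Pr)`.
-/

theorem cubic_eq_zero_of_eq_inv_sub {m v Pr p : ℝ} (hPr : Pr ≠ 0) (hp : p ≠ 0)
    (h : p = 1 / v - 1 / (m * (p / Pr) ^ 2)) :
    p ^ 3 - (1 / v) * p ^ 2 + Pr ^ 2 / m = 0 := by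
  have hinv : p ^ 2 * (1 / (m * (p / Pr) ^ 2)) = Pr ^ 2 / m := by
    field_simp
  linear_combination p ^ 2 * h - hinv

theorem mul_sq_div_le_of_cubic_eq_zero {m v Pr p : ℝ} (hv : v ≠ 0) (hp : 0 ≤ p)
    (h : p ^ 3 - (1 / v) * p ^ 2 + Pr ^ 2 / m = 0) :
    4 * v ^ 2 * Pr ^ 2 / m ≤ p := by
  have hsplit : 4 * v ^ 2 * Pr ^ 2 / m = p - p * (2 * v * p - 1) ^ 2 := by
    rw [mul_div_assoc, show Pr ^ 2 / m = p ^ 2 / v - p ^ 3 by linear_combination h]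
    field_simp
    ring
  rw [hsplit]
  exact sub_le_self p (mul_nonneg hp (sq_nonneg _))

theorem one_div_two_mul_le_of_div_eq_add_sqrt {v Pr p x : ℝ} (hPr : 0 < Pr)
    (h : p / Pr = 1 / (2 * v * Pr) + √x) :
    1 / (2 * v) ≤ p := by
  have hle : 1 / (2 * v) / Pr ≤ p / Pr := by
    rw [h, div_div]
    exact le_add_of_nonneg_right (Real.sqrt_nonneg x)
  exact (div_le_div_iff_of_pos_right hPr).mp hle

theorem stmt_14_general (m v Pr p t w : ℝ) (hv : 0 < v) (hPr : 0 < Pr)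
    (hp : 0 < p) (ht : t = p / Pr) (hw : w = 2 * v * Pr)
    (h1 : p = 1 / v - 1 / (m * t ^ 2))
    (h2 : t = 1 / w + Real.sqrt (1 / w ^ 2 - 1 / (m * p))) :
    p ^ 3 - (1 / v) * p ^ 2 + Pr ^ 2 / m = 0 ∧
      max (4 * v ^ 2 * Pr ^ 2 / m) (1 / (2 * v)) ≤ p := by
  subst ht hw
  have hcubic := cubic_eq_zero_of_eq_inv_sub hPr.ne' hp.ne' h1
  exact ⟨hcubic, max_le (mul_sq_div_le_of_cubic_eq_zero hv.ne' hp.le hcubic)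
    (one_div_two_mul_le_of_div_eq_add_sqrt hPr h2)⟩

theorem stmt_14 (m v Pr p t w : ℝ) (hm : 0 < m) (hv : 0 < v) (hPr : 0 < Pr)
    (hp : 0 < p) (ht : t = p / Pr) (hw : w = 2 * v * Pr)
    (h1 : p = 1 / v - 1 / (m * t ^ 2))
    (h2 : t = 1 / w + Real.sqrt (1 / w ^ 2 - 1 / (m * p))) :
    p ^ 3 - (1 / v) * p ^ 2 + Pr ^ 2 / m = 0 ∧
      max (4 * v ^ 2 * Pr ^ 2 / m) (1 / (2 * v)) ≤ p :=
  stmt_14_general m v Pr p t w hv hPr hp ht hw h1 h2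
end
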